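/- arXiv:2501.15135 — 6 statements merged into one kernel-verified Lean document; each statement's English description precedes it below -/
import Mathlib

section
/- For the morphisms f and φ on words (f: 0→01, 1→022, 2→02 over {0,1,2}; φ: 0→01, 1→02, 2→03, 3→04, 4→044 over {0,1,2,3,4}) and the morphism ψ: {0,1,2,3,4}* → {0,1,2}* given by 0→0, 1→1, 2→22, 3→202, 4→20102, one has f ∘ ψ = ψ ∘ φ as monoid homomorphisms. -/
/-- letter images of the morphism f: 0→01, 1→022, 2→02 -/
def fm : Fin 3 → List (Fin 3) := ![[0,1],[0,2,2],[0,2]]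
/-- the morphism f on words -/
def f (w : List (Fin 3)) : List (Fin 3) := w.flatMap fm

/-- letter images of φ: 0→01, 1→02, 2→03, 3→04, 4→044 -/
def phim : Fin 5 → List (Fin 5) := ![[0,1],[0,2],[0,3],[0,4],[0,4,4]]
/-- the morphism φ on words -/
def phi (w : List (Fin 5)) : List (Fin 5) := w.flatMap phim

/-- letter images of ψ: 0→0, 1→1, 2→22, 3→202, 4→20102 -/
def psim : Fin 5 → List (Fin 3) := ![[0],[1],[2,2],[2,0,2],[2,0,1,0,2]]
/-- the morphism ψ on words -/
def psi (w : List (Fin 5)) : List (Fin 3) := w.flatMap psim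

/-- letter images of g: 0→20, 1→21, 2→2 -/
def gm : Fin 3 → List (Fin 3) := ![[2,0],[2,1],[2]]
/-- the morphism g on words -/
def g (w : List (Fin 3)) : List (Fin 3) := w.flatMap gm

def A : List (Fin 3) := [0,0,1,0,1,1,0,1]
def B : List (Fin 3) := [0,0,1]
def C : List (Fin 3) := [0,0,2,0,2,2,0,2]
def D : List (Fin 3) := [0,0,2]

/-- letter images of ξ: 0→A, 1→AD, 2→AC, 3→ACC, 4→ACCBCC -/
def xim : Fin 5 → List (Fin 3) := ![A, A++D, A++C, A++C++C, A++C++C++B++C++C]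
/-- the morphism ξ on words -/
def xi (w : List (Fin 5)) : List (Fin 3) := w.flatMap xim

/-- the antimorphism S: reversal composed with the exchange 1↔2 (0 fixed) -/
def S (w : List (Fin 3)) : List (Fin 3) := (w.map ![0,2,1]).reverse

theorem List.flatMap_flatMap_eq_of_forall {α β γ δ : Type*} {σ : α → List β} {τ : β → List δ}
    {ρ : α → List γ} {κ : γ → List δ} (h : ∀ a, (σ a).flatMap τ = (ρ a).flatMap κ) (w : List α) :
    (w.flatMap σ).flatMap τ = (w.flatMap ρ).flatMap κ := by
  simp only [List.flatMap_assoc, h]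

/-- f ∘ ψ = ψ ∘ φ as monoid homomorphisms. -/
theorem stmt0 : ∀ w : List (Fin 5), f (psi w) = psi (phi w) :=
  List.flatMap_flatMap_eq_of_forall (by decide)
end

section
/- For every natural number n, f^n ∘ ψ = ψ ∘ φ^n, where f, φ, ψ are the morphisms defined by f(0)=01, f(1)=022, f(2)=02; φ(0)=01, φ(1)=02, φ(2)=03, φ(3)=04, φ(4)=044; ψ(0)=0, ψ(1)=1, ψ(2)=22, ψ(3)=202, ψ(4)=20102. -/
theorem List.semiconj_flatMap {α β : Type*} {σ : α → List β} {τ : α → List α}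
    {ρ : β → List β} (h : ∀ a, (τ a).flatMap σ = (σ a).flatMap ρ) :
    Function.Semiconj (List.flatMap σ) (List.flatMap τ) (List.flatMap ρ) := fun w => by
  simp only [List.flatMap_assoc, h]

theorem psi_semiconj_phi_f : Function.Semiconj psi phi f :=
  List.semiconj_flatMap (by decide)

/-- f^n ∘ ψ = ψ ∘ φ^n for every n. -/
theorem stmt1 : ∀ n : ℕ, ∀ w : List (Fin 5), f^[n] (psi w) = psi (phi^[n] w) :=
  fun n w => (psi_semiconj_phi_f.iterate_right n w).symm
end

section
/- For every k ∈ ℕ, the word x_k = ξ(φ^k(2))·00 is an S-palindrome, where φ(0)=01, φ(1)=02, φ(2)=03, φ(3)=04, φ(4)=044, ξ(0)=A, ξ(1)=AD, ξ(2)=AC, ξ(3)=ACC, ξ(4)=ACCBCC with A=00101101, B=001, C=00202202, D=002, and S is the antimorphism fixing 0 and exchanging 1↔2. -/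
/-
Write `U k a = ξ(φ^k(a))`. As every `φ(a)` starts with `0`, the blocks of level `k+1` are
`U0U1, U0U2, U0U3, U0U4, U0U4U4` in terms of the blocks `Ui` of level `k`. Moving the suffix `00`
to the front turns `U2`, `U3`, `U4` into products of S-images of blocks:
`U2·00 = 00·S(U2)`, `U3·00 = 00·S(U2)S(U0)`, `U4·00 = 00·S(U2)S(U0)S(U1)S(U0)`.
These identities pass from level `k` to level `k+1`, the pivot being `U0·00·S(U2) = 00·S(U3)`
(the S-image of the second identity, rewritten by the first). Since `S(00) = 00`, the first
identity is the claim.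
-/

open Function

theorem List.flatMap_iterate {α : Type*} (σ : α → List α) (k : ℕ) (w : List α) :
    (fun v => v.flatMap σ)^[k] w = w.flatMap fun a => (fun v => v.flatMap σ)^[k] [a] := by
  induction k generalizing w with
  | zero => simp
  | succ k ih =>
    simp only [iterate_succ_apply, List.flatMap_singleton]
    rw [ih, List.flatMap_assoc]
    simp only [← ih]

def U (k : ℕ) (a : Fin 5) : List (Fin 3) := xi (phi^[k] [a])

theorem U_succ (k : ℕ) (a : Fin 5) : U (k + 1) a = (phim a).flatMap (U k) := by
  change xi ((fun v => v.flatMap phim)^[k] ([a].flatMap phim)) = _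
  rw [List.flatMap_singleton, List.flatMap_iterate, xi, List.flatMap_assoc]
  rfl

theorem S_append (u v : List (Fin 3)) : S (u ++ v) = S v ++ S u := by
  simp [S]

theorem S_involutive : Involutive S := by
  intro w
  have : (![0, 2, 1] : Fin 3 → Fin 3) ∘ ![0, 2, 1] = id := by decide
  simp only [S, List.map_reverse, List.reverse_reverse, List.map_map, this, List.map_id]

theorem S_zero_zero : S [0, 0] = [0, 0] := rfl

theorem append_zero_zero_step {u₀ u₁ u₂ u₃ u₄ : List (Fin 3)}
    (h₂ : u₂ ++ [0, 0] = [0, 0] ++ S u₂)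
    (h₃ : u₃ ++ [0, 0] = [0, 0] ++ S u₂ ++ S u₀)
    (h₄ : u₄ ++ [0, 0] = [0, 0] ++ S u₂ ++ S u₀ ++ S u₁ ++ S u₀) :
    u₀ ++ u₃ ++ [0, 0] = [0, 0] ++ S (u₀ ++ u₃) ∧
    u₀ ++ u₄ ++ [0, 0] = [0, 0] ++ S (u₀ ++ u₃) ++ S (u₀ ++ u₁) ∧
    u₀ ++ u₄ ++ u₄ ++ [0, 0] =
      [0, 0] ++ S (u₀ ++ u₃) ++ S (u₀ ++ u₁) ++ S (u₀ ++ u₂) ++ S (u₀ ++ u₁) := by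
  have key : u₀ ++ [0, 0] ++ S u₂ = [0, 0] ++ S u₃ :=
    calc u₀ ++ [0, 0] ++ S u₂ = u₀ ++ u₂ ++ [0, 0] := by simp only [List.append_assoc, h₂]
      _ = S ([0, 0] ++ S u₂ ++ S u₀) := by
          simp only [S_append, S_involutive _, S_zero_zero, List.append_assoc]
      _ = [0, 0] ++ S u₃ := by rw [← h₃, S_append, S_zero_zero]
  refine ⟨?_, ?_, ?_⟩
  · calc u₀ ++ u₃ ++ [0, 0] = u₀ ++ [0, 0] ++ S u₂ ++ S u₀ := by
          rw [List.append_assoc u₀, h₃]; simp only [List.append_assoc]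
      _ = [0, 0] ++ S u₃ ++ S u₀ := by rw [key]
      _ = [0, 0] ++ S (u₀ ++ u₃) := by rw [S_append, List.append_assoc]
  · calc u₀ ++ u₄ ++ [0, 0] = u₀ ++ [0, 0] ++ S u₂ ++ S u₀ ++ S u₁ ++ S u₀ := by
          rw [List.append_assoc u₀, h₄]; simp only [List.append_assoc]
      _ = [0, 0] ++ S u₃ ++ S u₀ ++ S u₁ ++ S u₀ := by rw [key]
      _ = [0, 0] ++ S (u₀ ++ u₃) ++ S (u₀ ++ u₁) := by simp only [S_append, List.append_assoc]
  · calc u₀ ++ u₄ ++ u₄ ++ [0, 0] = u₀ ++ u₄ ++ [0, 0] ++ S u₂ ++ S u₀ ++ S u₁ ++ S u₀ := by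
          rw [List.append_assoc (u₀ ++ u₄), h₄]; simp only [List.append_assoc]
      _ = u₀ ++ [0, 0] ++ S u₂ ++ S u₀ ++ S u₁ ++ S u₀ ++ S u₂ ++ S u₀ ++ S u₁ ++ S u₀ := by
          rw [List.append_assoc u₀ u₄, h₄]; simp only [List.append_assoc]
      _ = [0, 0] ++ S u₃ ++ S u₀ ++ S u₁ ++ S u₀ ++ S u₂ ++ S u₀ ++ S u₁ ++ S u₀ := by rw [key]
      _ = [0, 0] ++ S (u₀ ++ u₃) ++ S (u₀ ++ u₁) ++ S (u₀ ++ u₂) ++ S (u₀ ++ u₁) := by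
          simp only [S_append, List.append_assoc]

theorem U_append_zero_zero (k : ℕ) :
    U k 2 ++ [0, 0] = [0, 0] ++ S (U k 2) ∧
    U k 3 ++ [0, 0] = [0, 0] ++ S (U k 2) ++ S (U k 0) ∧
    U k 4 ++ [0, 0] = [0, 0] ++ S (U k 2) ++ S (U k 0) ++ S (U k 1) ++ S (U k 0) := by
  induction k with
  | zero => exact ⟨by decide, by decide, by decide⟩
  | succ k ih =>
    obtain ⟨h₂, h₃, h₄⟩ := ih
    simp only [U_succ, phim, Matrix.cons_val, List.flatMap_cons, List.flatMap_nil, List.append_nil]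
    simpa only [List.append_assoc] using append_zero_zero_step h₂ h₃ h₄

/-- for every k, ξ(φ^k(2))·00 is an S-palindrome. -/
theorem stmt9 : ∀ k : ℕ, S (xi (phi^[k] [2]) ++ [0,0]) = xi (phi^[k] [2]) ++ [0,0] := by
  intro k
  rw [S_append, S_zero_zero]
  exact (U_append_zero_zero k).1.symm
end

section
/- Let E be the antimorphism on {0,1}* mapping a word to its reversal with letters 0 and 1 exchanged. Every word w over {0,1} that is E-rich (i.e., every factor of w contains the maximal possible number of distinct E-palindromic factors) is a factor of the periodic sequence (01)^ω. In particular: if w is a binary word all of whose factors u satisfy that the number of distinct E-palindromic factors of u equals ⌊|u|/2⌋ + 1, then w is a factor of the sequence 010101⋯. -/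
/-- the antimorphism E on binary words: reversal with letters exchanged -/
def E (w : List (Fin 2)) : List (Fin 2) := (w.map ![1,0]).reverse

/-!
An E-rich word cannot contain a square `aa` of a letter: `E` maps a constant word to the constant
word on the other letter, so the only E-palindromic factor of `aa` is the empty word, one short of
the bound `⌊2/2⌋ + 1 = 2`. A binary word without such squares alternates between `0` and `1`, and
every alternating word is a factor of `(01)^ω`.
-/

open List

theorem E_replicate_ne_self {n : ℕ} (hn : n ≠ 0) (a : Fin 2) :
    E (replicate n a) ≠ replicate n a := by
  have hswap : ∀ a : Fin 2, ![1, 0] a ≠ a := by decide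
  simp [E, hn, hswap]

theorem ePalindromic_infixes_replicate (n : ℕ) (a : Fin 2) :
    {p : List (Fin 2) | p <:+: replicate n a ∧ E p = p} = {[]} := by
  ext p
  simp only [Set.mem_ofPred_eq, Set.mem_singleton_iff]
  constructor
  · rintro ⟨hinf, hpal⟩
    obtain ⟨-, hp⟩ := infix_replicate_iff.mp hinf
    by_contra hne
    rw [hp] at hpal
    exact E_replicate_ne_self (length_eq_zero_iff.not.mpr hne) a hpal
  · rintro rfl
    exact ⟨nil_infix, rfl⟩

theorem not_infix_pair_of_ePalindromic_rich {w : List (Fin 2)}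
    (H : ∀ u : List (Fin 2), u <:+: w →
      {p : List (Fin 2) | p <:+: u ∧ E p = p}.ncard = u.length / 2 + 1)
    (a : Fin 2) : ¬ [a, a] <:+: w := by
  intro ha
  have h := H (replicate 2 a) ha
  rw [ePalindromic_infixes_replicate, Set.ncard_singleton] at h
  simp at h

def alternating (a : Fin 2) : ℕ → List (Fin 2)
  | 0 => []
  | n + 1 => a :: alternating (a + 1) n

theorem alternating_add_two (a : Fin 2) (n : ℕ) :
    alternating a (n + 2) = a :: (a + 1) :: alternating a n := by
  have h : a + 1 + 1 = a := by fin_cases a <;> rfl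
  simp only [alternating, h]

theorem alternating_prefix_of_le {m n : ℕ} (h : m ≤ n) (a : Fin 2) :
    alternating a m <+: alternating a n := by
  induction m generalizing n a with
  | zero => exact nil_prefix
  | succ m ih =>
    obtain ⟨n, rfl⟩ := Nat.exists_eq_add_of_lt h
    exact cons_prefix_cons.mpr ⟨rfl, ih (by omega) _⟩

theorem alternating_zero_two_mul (n : ℕ) :
    alternating 0 (2 * n) = (replicate n ([0, 1] : List (Fin 2))).flatten := by
  induction n with
  | zero => rfl
  | succ n ih =>
    rw [Nat.mul_succ, alternating_add_two, ih, replicate_succ, flatten_cons]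
    rfl

theorem alternating_infix_alternating_zero (a : Fin 2) (n : ℕ) :
    alternating a n <:+: alternating 0 (n + 1) := by
  fin_cases a
  · exact (alternating_prefix_of_le (Nat.le_succ n) 0).isInfix
  · exact (suffix_cons 0 (alternating 1 n)).isInfix

theorem eq_alternating_of_isChain_ne {a : Fin 2} {t : List (Fin 2)}
    (h : IsChain (· ≠ ·) (a :: t)) : a :: t = alternating a (t.length + 1) := by
  induction t generalizing a with
  | nil => rfl
  | cons b t ih =>
    rw [isChain_cons_cons] at h
    have hb : b = a + 1 := by
      have : ∀ a b : Fin 2, a ≠ b → b = a + 1 := by decide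
      exact this a b h.1
    subst hb
    exact congrArg (a :: ·) (ih h.2)

theorem exists_infix_flatten_replicate_of_isChain_ne {w : List (Fin 2)}
    (h : IsChain (· ≠ ·) w) : ∃ n, w <:+: (replicate n ([0, 1] : List (Fin 2))).flatten := by
  rcases w with _ | ⟨a, t⟩
  · exact ⟨0, nil_infix⟩
  refine ⟨t.length + 2, ?_⟩
  rw [eq_alternating_of_isChain_ne h, ← alternating_zero_two_mul]
  exact (alternating_infix_alternating_zero a _).trans
    (alternating_prefix_of_le (by omega) 0).isInfix

/-- every E-rich binary word is a factor of (01)^ω. -/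
theorem stmt13 : ∀ w : List (Fin 2),
    (∀ u : List (Fin 2), u <:+: w →
      {p : List (Fin 2) | p <:+: u ∧ E p = p}.ncard = u.length / 2 + 1) →
    ∃ n : ℕ, w <:+: (List.replicate n ([0,1] : List (Fin 2))).flatten := by
  intro w H
  apply exists_infix_flatten_replicate_of_isChain_ne
  refine (isChain_isInfix w).imp fun a b hab hEq => ?_
  subst hEq
  exact not_infix_pair_of_ePalindromic_rich H a hab
end

section
/- A word u over any alphabet of length n contains at most n+1 distinct palindromic factors (including the empty word). -/
/-!
Appending a letter `a` to `u` creates at most one new palindromic factor, the longest palindromic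
suffix `L` of `u ++ [a]`: a shorter palindromic suffix is a suffix of `L`, hence, reversing, a
proper prefix of the palindrome `L`, and so it already occurs in `u`.
-/

open List

section Palindromes

variable {α : Type*}

def palindromicFactors (u : List α) : Set (List α) := {p | p <:+: u ∧ p.reverse = p}

theorem palindromicFactors_nil : palindromicFactors ([] : List α) = {[]} := by
  ext p
  simp +contextual [palindromicFactors, infix_nil]

theorem finite_palindromicFactors (u : List α) : (palindromicFactors u).Finite :=
  u.sublists.finite_toSet.subset fun _ hp => mem_sublists.2 hp.1.sublist

theorem List.IsSuffix.isPrefix_of_reverse_eq {p L : List α} (h : p <:+ L) (hp : p.reverse = p)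
    (hL : L.reverse = L) : p <+: L := by
  simpa only [hp, hL] using h.reverse

theorem infix_of_suffix_of_length_lt_palindromic_suffix {u p L : List α} {a : α}
    (hp : p <:+ u ++ [a]) (hpal : p.reverse = p) (hL : L <:+ u ++ [a]) (hLpal : L.reverse = L)
    (hlt : p.length < L.length) : p <:+: u := by
  have hpL : p <+: L := (suffix_of_suffix_length_le hp hL hlt.le).isPrefix_of_reverse_eq hpal hLpal
  obtain rfl | ⟨L', rfl, hL'⟩ := suffix_concat_iff.1 hL
  · simp at hlt
  obtain rfl | hpL' := prefix_concat_iff.1 hpL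
  · exact absurd hlt (lt_irrefl _)
  · exact hpL'.isInfix.trans hL'.isInfix

theorem exists_palindromicFactors_concat_subset_insert (u : List α) (a : α) :
    ∃ L, palindromicFactors (u ++ [a]) ⊆ insert L (palindromicFactors u) := by
  obtain ⟨L, ⟨hL, hLpal⟩, hLmax⟩ := Set.exists_max_image {p | p <:+ u ++ [a] ∧ p.reverse = p}
    length ((finite_palindromicFactors (u ++ [a])).subset fun p hp => ⟨hp.1.isInfix, hp.2⟩)
    ⟨[], nil_suffix, rfl⟩
  refine ⟨L, fun p ⟨hinf, hpal⟩ => ?_⟩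
  rcases infix_concat_iff.1 hinf with hp | hp
  · obtain rfl | hne := eq_or_ne p L
    · exact Set.mem_insert p _
    refine Or.inr ⟨infix_of_suffix_of_length_lt_palindromic_suffix hp hpal hL hLpal ?_, hpal⟩
    exact (hLmax p ⟨hp, hpal⟩).lt_of_ne
      fun h => hne ((suffix_of_suffix_length_le hp hL h.le).eq_of_length h)
  · exact Or.inr ⟨hp, hpal⟩

theorem ncard_palindromicFactors_concat_le (u : List α) (a : α) :
    (palindromicFactors (u ++ [a])).ncard ≤ (palindromicFactors u).ncard + 1 := by
  obtain ⟨L, hL⟩ := exists_palindromicFactors_concat_subset_insert u a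
  exact (Set.ncard_le_ncard hL ((finite_palindromicFactors u).insert L)).trans
    (Set.ncard_insert_le L _)

theorem ncard_palindromicFactors_le (u : List α) :
    (palindromicFactors u).ncard ≤ u.length + 1 := by
  induction u using List.reverseRecOn with
  | nil => simp [palindromicFactors_nil]
  | append_singleton u a ih =>
    rw [length_append, length_singleton]
    exact (ncard_palindromicFactors_concat_le u a).trans (Nat.add_le_add_right ih 1)

end Palindromes

/-- a word of length n has at most n+1 distinct palindromic factors. -/
theorem stmt14 {α : Type*} : ∀ u : List α,
    {p : List α | p <:+: u ∧ p.reverse = p}.ncard ≤ u.length + 1 :=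
  ncard_palindromicFactors_le
end

section
/- If a finite word w of length n contains exactly n+1 distinct palindromic factors (i.e., w is rich), then every factor of w is also rich. -/
/-! Appending a letter to a word creates at most one new palindromic factor: a new one must be a
suffix, and of two palindromic suffixes the shorter is also a prefix of the longer, hence already
occurs before the last letter. So `u ++ v` has at most `(palFactors u).ncard + v.length`
palindromic factors, in particular every word `w` has at most `w.length + 1`, and richness of
`u ++ v` forces richness of `u`. Reversal preserves palindromic factors, which turns the statement
for prefixes into one for suffixes. -/

namespace List

variable {α : Type*}

def palFactors (w : List α) : Set (List α) := {p | p <:+: w ∧ p.reverse = p}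

def IsRich (w : List α) : Prop := (palFactors w).ncard = w.length + 1

theorem palFactors_finite (w : List α) : (palFactors w).Finite :=
  w.sublists.finite_toSet.subset fun _ hp => mem_sublists.2 hp.1.sublist

@[simp]
theorem palFactors_nil : palFactors ([] : List α) = {[]} := by
  ext p
  simp +contextual [palFactors]

@[simp]
theorem palFactors_reverse (w : List α) : palFactors w.reverse = palFactors w := by
  ext p
  simp only [palFactors, Set.mem_ofPred_eq, and_congr_left_iff]
  intro hp
  rw [← reverse_infix, reverse_reverse, hp]

theorem eq_of_palindrome_suffix {w p q : List α} {a : α} (hp : p.reverse = p)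
    (hq : q.reverse = q) (hpq : p <:+ q) (hqw : q <:+ w ++ [a]) (hpw : ¬p <:+: w) : p = q := by
  have hpq' : p <+: q := by rwa [← reverse_suffix, hp, hq]
  obtain rfl | ⟨t, rfl, htw⟩ := suffix_concat_iff.1 hqw
  · exact suffix_nil.1 hpq
  · exact (prefix_concat_iff.1 hpq').resolve_right fun hpt => hpw (hpt.isInfix.trans htw.isInfix)

theorem palFactors_concat_diff_subsingleton (w : List α) (a : α) :
    (palFactors (w ++ [a]) \ palFactors w).Subsingleton := by
  have new_suffix : ∀ p ∈ palFactors (w ++ [a]) \ palFactors w, p <:+ w ++ [a] ∧ ¬p <:+: w :=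
    fun p ⟨⟨hpi, hpal⟩, hpn⟩ =>
      have hpw : ¬p <:+: w := fun h => hpn ⟨h, hpal⟩
      ⟨(infix_concat_iff.1 hpi).resolve_right hpw, hpw⟩
  intro p hp q hq
  obtain ⟨hps, hpw⟩ := new_suffix p hp
  obtain ⟨hqs, hqw⟩ := new_suffix q hq
  rcases suffix_or_suffix_of_suffix hps hqs with hpq | hqp
  · exact eq_of_palindrome_suffix hp.1.2 hq.1.2 hpq hqs hpw
  · exact (eq_of_palindrome_suffix hq.1.2 hp.1.2 hqp hps hqw).symm

theorem ncard_palFactors_concat_le (w : List α) (a : α) :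
    (palFactors (w ++ [a])).ncard ≤ (palFactors w).ncard + 1 :=
  calc (palFactors (w ++ [a])).ncard
      ≤ (palFactors (w ++ [a]) \ palFactors w).ncard + (palFactors w).ncard :=
        Set.ncard_le_ncard_sdiff_add_ncard _ _ (palFactors_finite w)
    _ ≤ 1 + (palFactors w).ncard := by
        gcongr
        exact (Set.ncard_le_one_iff ((palFactors_finite _).sdiff)).2 fun hp hq =>
          palFactors_concat_diff_subsingleton w a hp hq
    _ = (palFactors w).ncard + 1 := Nat.add_comm _ _

theorem ncard_palFactors_append_le (w t : List α) :
    (palFactors (w ++ t)).ncard ≤ (palFactors w).ncard + t.length := by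
  induction t using reverseRecOn with
  | nil => simp
  | append_singleton t a ih =>
    calc (palFactors (w ++ (t ++ [a]))).ncard
        ≤ (palFactors (w ++ t)).ncard + 1 := by
          rw [← append_assoc]; exact ncard_palFactors_concat_le _ _
      _ ≤ (palFactors w).ncard + (t ++ [a]).length := by
          rw [length_append, length_singleton]; omega

theorem ncard_palFactors_le (w : List α) : (palFactors w).ncard ≤ w.length + 1 := by
  simpa [Nat.add_comm] using ncard_palFactors_append_le [] w

theorem IsRich.of_prefix {w u : List α} (hw : w.IsRich) (h : u <+: w) : u.IsRich := by
  obtain ⟨t, rfl⟩ := h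
  have h₁ := ncard_palFactors_append_le u t
  have h₂ := ncard_palFactors_le u
  rw [IsRich, length_append] at hw
  rw [IsRich]
  omega

@[simp]
theorem isRich_reverse {w : List α} : w.reverse.IsRich ↔ w.IsRich := by
  simp [IsRich]

theorem IsRich.of_suffix {w u : List α} (hw : w.IsRich) (h : u <:+ w) : u.IsRich :=
  isRich_reverse.1 <| (isRich_reverse.2 hw).of_prefix (reverse_prefix.2 h)

theorem IsRich.of_infix {w u : List α} (hw : w.IsRich) (h : u <:+: w) : u.IsRich := by
  obtain ⟨t, hut, htw⟩ := infix_iff_prefix_suffix.1 h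
  exact (hw.of_suffix htw).of_prefix hut

end List

/-- every factor of a rich word is rich. -/
theorem stmt15 {α : Type*} : ∀ w : List α,
    {p : List α | p <:+: w ∧ p.reverse = p}.ncard = w.length + 1 →
    ∀ v : List α, v <:+: w →
      {p : List α | p <:+: v ∧ p.reverse = p}.ncard = v.length + 1 :=
  fun _ hw _ hv => List.IsRich.of_infix hw hv
end
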